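/- arXiv:1712.01906 — 2 statements merged into one kernel-verified Lean document; each statement's English description precedes it below -/
import Mathlib

section
/- Let x, x* ∈ ℝ^d, γ > 0, ω ∈ (0,1) and σ ∈ ℝ. Let G : Ω → ℝ^d be a measurable map with E[‖G‖²] < ∞. If E[‖(x - γ·G) - x*‖²] ≤ ω‖x - x*‖² + γ²σ², then E[‖G‖²] ≤ (1/(1-ω))‖E[G]‖² + σ². (One-step form of Theorem 1(i): x is the current iterate, G the stochastic gradient mapping 𝒢(x_t, ξ_t), and x - γG the next iterate.) -/
/-!
Expanding the square, `E‖(x - x*) - γG‖² = ‖x - x*‖² - 2γ⟨x - x*, E G⟩ + γ² E‖G‖²`.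
With Cauchy–Schwarz the hypothesis becomes a quadratic inequality
`(1 - ω) t² - 2γ‖E G‖ t + γ² (E‖G‖² - σ²) ≤ 0` in `t = ‖x - x*‖`, and a quadratic with
positive leading coefficient that takes a nonpositive value has nonnegative discriminant.
-/

open MeasureTheory

theorem le_sq_div_of_quadratic_nonpos {c t m B : ℝ} (hc : 0 < c)
    (h : c * t ^ 2 - 2 * m * t + B ≤ 0) : B ≤ m ^ 2 / c := by
  rw [le_div_iff₀ hc]
  nlinarith [sq_nonneg (c * t - m)]

section SecondMoment

variable {E Ω : Type*} [NormedAddCommGroup E] [InnerProductSpace ℝ E] [CompleteSpace E]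
  [MeasurableSpace Ω] {P : Measure Ω}

theorem integral_norm_sub_smul_sq [IsProbabilityMeasure P] (v : E) (γ : ℝ) {G : Ω → E}
    (hG : Integrable G P) (hG2 : Integrable (fun a => ‖G a‖ ^ 2) P) :
    ∫ a, ‖v - γ • G a‖ ^ 2 ∂P
      = ‖v‖ ^ 2 - 2 * γ * inner ℝ v (∫ a, G a ∂P) + γ ^ 2 * ∫ a, ‖G a‖ ^ 2 ∂P := by
  have hpointwise : ∀ a, ‖v - γ • G a‖ ^ 2
      = ‖v‖ ^ 2 - 2 * γ * inner ℝ v (G a) + γ ^ 2 * ‖G a‖ ^ 2 := fun a => by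
    rw [norm_sub_sq_real, real_inner_smul_right, norm_smul, mul_pow, Real.norm_eq_abs, sq_abs]
    ring
  have hinner : Integrable (fun a => 2 * γ * inner ℝ v (G a)) P := (hG.const_inner v).const_mul _
  have hlinear : Integrable (fun a => ‖v‖ ^ 2 - 2 * γ * inner ℝ v (G a)) P :=
    (integrable_const _).sub hinner
  simp_rw [hpointwise]
  rw [integral_add hlinear (hG2.const_mul _),
    integral_sub (integrable_const _) hinner, integral_const, integral_const_mul,
    integral_const_mul, integral_inner hG]
  simp

theorem integral_norm_sq_le_of_step_contraction [IsProbabilityMeasure P] (v : E)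
    {γ ω σ : ℝ} (hγ : 0 < γ) (hω : ω < 1) {G : Ω → E} (hG : Integrable G P)
    (hG2 : Integrable (fun a => ‖G a‖ ^ 2) P)
    (hstep : ∫ a, ‖v - γ • G a‖ ^ 2 ∂P ≤ ω * ‖v‖ ^ 2 + γ ^ 2 * σ ^ 2) :
    ∫ a, ‖G a‖ ^ 2 ∂P ≤ (1 / (1 - ω)) * ‖∫ a, G a ∂P‖ ^ 2 + σ ^ 2 := by
  set m := ∫ a, G a ∂P
  set A := ∫ a, ‖G a‖ ^ 2 ∂P
  rw [integral_norm_sub_smul_sq v γ hG hG2] at hstep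
  have hcs : inner ℝ v m ≤ ‖v‖ * ‖m‖ := real_inner_le_norm v m
  have hquad : (1 - ω) * ‖v‖ ^ 2 - 2 * (γ * ‖m‖) * ‖v‖ + γ ^ 2 * (A - σ ^ 2) ≤ 0 := by
    nlinarith
  have hdisc := le_sq_div_of_quadratic_nonpos (sub_pos.2 hω) hquad
  rw [mul_pow, mul_div_assoc, mul_le_mul_iff_right₀ (by positivity)] at hdisc
  rw [one_div_mul_eq_div]
  linarith

end SecondMoment

/-- One-step form of Theorem 1(i): if one stochastic-gradient step contracts
the expected squared distance up to `γ²σ²`, then the second moment of the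
stochastic gradient mapping satisfies the (weak) growth-type inequality. -/
theorem stmt_0 {d : ℕ} {Ω : Type*} [MeasurableSpace Ω] (P : Measure Ω)
    [IsProbabilityMeasure P] (x xstar : EuclideanSpace ℝ (Fin d))
    (γ ω σ : ℝ) (hγ : 0 < γ) (hω : ω ∈ Set.Ioo (0 : ℝ) 1)
    (G : Ω → EuclideanSpace ℝ (Fin d)) (hGmeas : Measurable G)
    (hGL2 : Integrable (fun a => ‖G a‖ ^ 2) P)
    (hstep : ∫ a, ‖x - γ • G a - xstar‖ ^ 2 ∂P ≤ ω * ‖x - xstar‖ ^ 2 + γ ^ 2 * σ ^ 2) :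
    ∫ a, ‖G a‖ ^ 2 ∂P ≤ (1 / (1 - ω)) * ‖∫ a, G a ∂P‖ ^ 2 + σ ^ 2 := by
  have hGint : Integrable G P :=
    ((memLp_two_iff_integrable_sq_norm hGmeas.aestronglyMeasurable).2 hGL2).integrable
      one_le_two
  simp_rw [sub_right_comm x _ xstar] at hstep
  exact integral_norm_sq_le_of_step_contraction (x - xstar) hγ hω.2 hGint hGL2 hstep
end

section
/- Let B : ℝ^d → ℝ^d be β-cocoercive (β > 0) and μ-strongly monotone (μ > 0), i.e., ⟨x - y, Bx - By⟩ ≥ β‖Bx - By‖² and ⟨x - y, Bx - By⟩ ≥ μ‖x - y‖² for all x, y. Let T : ℝ^d → ℝ^d be nonexpansive (1-Lipschitz), γ > 0, and x* ∈ ℝ^d with T(x* - γBx*) = x*. Fix x ∈ ℝ^d and let H : Ω → ℝ^d be measurable with E[H] = Bx and E[‖H‖²] ≤ M‖Bx‖² + σ² for constants M > 0, σ ∈ ℝ. Set σ₁² = 2(1 + 2M)‖Bx*‖² + 2σ² and ρ = γμ(1 - 2γM/β), and assume ρ ∈ (0,1). Then E[‖T(x - γH) - x*‖²] ≤ (1 -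 ρ)‖x - x*‖² + γ²σ₁². -/
open MeasureTheory
open scoped RealInnerProductSpace

set_option maxHeartbeats 2000000 in
/-- Extension of Proposition 1 to cocoercive strongly monotone operators: one
step of the stochastic forward-backward iteration, under the weak growth
condition, contracts the squared distance to the fixed point `x*` up to the
noise term `γ²σ₁²`. -/
theorem stmt_15 {d : ℕ} {Ω : Type*} [MeasurableSpace Ω] (P : Measure Ω)
    [IsProbabilityMeasure P]
    (B : EuclideanSpace ℝ (Fin d) → EuclideanSpace ℝ (Fin d))
    (β : ℝ) (hβ : 0 < β)
    (hcoco : ∀ y z, ⟪y - z, B y - B z⟫ ≥ β * ‖B y - B z‖ ^ 2)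
    (μ : ℝ) (hμ : 0 < μ)
    (hsm : ∀ y z, ⟪y - z, B y - B z⟫ ≥ μ * ‖y - z‖ ^ 2)
    (T : EuclideanSpace ℝ (Fin d) → EuclideanSpace ℝ (Fin d))
    (hT : LipschitzWith 1 T)
    (γ : ℝ) (hγ : 0 < γ)
    (xstar : EuclideanSpace ℝ (Fin d)) (hfix : T (xstar - γ • B xstar) = xstar)
    (x : EuclideanSpace ℝ (Fin d))
    (H : Ω → EuclideanSpace ℝ (Fin d)) (hHmeas : Measurable H)
    (hHint : Integrable H P) (hHL2 : Integrable (fun a => ‖H a‖ ^ 2) P)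
    (M σ : ℝ) (hM : 0 < M)
    (hunbiased : ∫ a, H a ∂P = B x)
    (hwgc : ∫ a, ‖H a‖ ^ 2 ∂P ≤ M * ‖B x‖ ^ 2 + σ ^ 2)
    (σ1sq ρ : ℝ)
    (hσ1 : σ1sq = 2 * (1 + 2 * M) * ‖B xstar‖ ^ 2 + 2 * σ ^ 2)
    (hρ : ρ = γ * μ * (1 - 2 * γ * M / β)) (hρmem : ρ ∈ Set.Ioo (0 : ℝ) 1) :
    ∫ a, ‖T (x - γ • H a) - xstar‖ ^ 2 ∂P ≤
      (1 - ρ) * ‖x - xstar‖ ^ 2 + γ ^ 2 * σ1sq := by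
  set e := x - xstar with he
  set g := B x with hg
  set gs := B xstar with hgs
  -- pointwise bound
  have key : ∀ a, ‖T (x - γ • H a) - xstar‖ ^ 2 ≤
      ‖e‖ ^ 2 - 2 * γ * ⟪e, H a⟫ + 2 * γ * ⟪e, gs⟫
        + 2 * γ ^ 2 * ‖H a‖ ^ 2 + 2 * γ ^ 2 * ‖gs‖ ^ 2 := by
    intro a
    have h1 : ‖T (x - γ • H a) - xstar‖ ≤ ‖(x - γ • H a) - (xstar - γ • gs)‖ := by
      conv_lhs => rw [← hfix]
      simpa [dist_eq_norm] using hT.dist_le_mul (x - γ • H a) (xstar - γ • gs)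
    have h2 : (x - γ • H a) - (xstar - γ • gs) = e - γ • (H a - gs) := by
      rw [he, smul_sub]; abel
    have h1' : ‖T (x - γ • H a) - xstar‖ ^ 2 ≤ ‖e - γ • (H a - gs)‖ ^ 2 := by
      rw [← h2]; exact pow_le_pow_left₀ (norm_nonneg _) h1 2
    have h3 : ‖e - γ • (H a - gs)‖ ^ 2
        = ‖e‖ ^ 2 - 2 * (γ * ⟪e, H a - gs⟫) + γ ^ 2 * ‖H a - gs‖ ^ 2 := by
      rw [norm_sub_sq_real, real_inner_smul_right, norm_smul, Real.norm_eq_abs,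
        mul_pow, sq_abs]
    have h4 : ⟪e, H a - gs⟫ = ⟪e, H a⟫ - ⟪e, gs⟫ := inner_sub_right e (H a) gs
    have h5 : ‖H a - gs‖ ^ 2 ≤ 2 * ‖H a‖ ^ 2 + 2 * ‖gs‖ ^ 2 := by
      have := norm_sub_le (H a) gs
      nlinarith [norm_nonneg (H a), norm_nonneg gs, norm_nonneg (H a - gs),
        sq_nonneg (‖H a‖ - ‖gs‖)]
    nlinarith [sq_nonneg γ]
  -- integrability of the majorant
  have hinner : Integrable (fun a => ⟪e, H a⟫) P := hHint.const_inner e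
  have hmaj : Integrable (fun a =>
      ‖e‖ ^ 2 - 2 * γ * ⟪e, H a⟫ + 2 * γ * ⟪e, gs⟫
        + 2 * γ ^ 2 * ‖H a‖ ^ 2 + 2 * γ ^ 2 * ‖gs‖ ^ 2) P := by
    apply Integrable.add
    apply Integrable.add
    apply Integrable.add
    · exact (integrable_const _).sub (hinner.const_mul _)
    · exact integrable_const _
    · exact hHL2.const_mul _
    · exact integrable_const _
  -- integral of the majorant
  have hIeq : ∫ a, (‖e‖ ^ 2 - 2 * γ * ⟪e, H a⟫ + 2 * γ * ⟪e, gs⟫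
        + 2 * γ ^ 2 * ‖H a‖ ^ 2 + 2 * γ ^ 2 * ‖gs‖ ^ 2) ∂P
      = ‖e‖ ^ 2 - 2 * γ * ⟪e, g⟫ + 2 * γ * ⟪e, gs⟫
        + 2 * γ ^ 2 * (∫ a, ‖H a‖ ^ 2 ∂P) + 2 * γ ^ 2 * ‖gs‖ ^ 2 := by
    rw [integral_add, integral_add, integral_add, integral_sub, integral_const,
      integral_const, integral_const, integral_const_mul, integral_const_mul,
      integral_inner hHint, hunbiased]
    · simp
    · exact integrable_const _
    · exact hinner.const_mul _
    · exact (integrable_const _).sub (hinner.const_mul _)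
    · exact integrable_const _
    · exact ((integrable_const _).sub (hinner.const_mul _)).add (integrable_const _)
    · exact hHL2.const_mul _
    · exact (((integrable_const _).sub (hinner.const_mul _)).add
        (integrable_const _)).add (hHL2.const_mul _)
    · exact integrable_const _
  have hmono : ∫ a, ‖T (x - γ • H a) - xstar‖ ^ 2 ∂P ≤
      ∫ a, (‖e‖ ^ 2 - 2 * γ * ⟪e, H a⟫ + 2 * γ * ⟪e, gs⟫
        + 2 * γ ^ 2 * ‖H a‖ ^ 2 + 2 * γ ^ 2 * ‖gs‖ ^ 2) ∂P := by
    apply integral_mono_of_nonneg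
    · exact Filter.Eventually.of_forall fun a => sq_nonneg _
    · exact hmaj
    · exact Filter.Eventually.of_forall key
  -- final real arithmetic
  have hEH : ∫ a, ‖H a‖ ^ 2 ∂P ≤ M * ‖g‖ ^ 2 + σ ^ 2 := hwgc
  have hs := hsm x xstar
  have hc := hcoco x xstar
  rw [← he, ← hg, ← hgs] at hs hc
  set s := ⟪e, g - gs⟫ with hsdef
  have hse : s = ⟪e, g⟫ - ⟪e, gs⟫ := inner_sub_right e g gs
  have hρpos : 0 < ρ := hρmem.1
  have hcpos : 0 < 1 - 2 * γ * M / β := by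
    by_contra h
    push_neg at h
    have h2 : ρ ≤ 0 := by
      rw [hρ]
      exact mul_nonpos_of_nonneg_of_nonpos (by positivity) h
    linarith
  have hs0 : 0 ≤ s := le_trans (by positivity) hs
  have hn2 : β * ‖g - gs‖ ^ 2 ≤ s := hc
  have hgbound : ‖g‖ ^ 2 ≤ 2 * ‖g - gs‖ ^ 2 + 2 * ‖gs‖ ^ 2 := by
    have h := norm_le_norm_add_norm_sub' g gs
    nlinarith [norm_nonneg g, norm_nonneg gs, norm_nonneg (g - gs),
      sq_nonneg (‖g - gs‖ - ‖gs‖)]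
  -- key inequality: -2γ s + 4γ²M ‖g-gs‖² ≤ -ρ‖e‖²
  have hkey : -(2 * γ) * s + 4 * γ ^ 2 * M * ‖g - gs‖ ^ 2 ≤ -(ρ * ‖e‖ ^ 2) := by
    have h1 : 4 * γ ^ 2 * M * ‖g - gs‖ ^ 2 ≤ (4 * γ ^ 2 * M / β) * s := by
      have h2 : 4 * γ ^ 2 * M * ‖g - gs‖ ^ 2 = (4 * γ ^ 2 * M / β) * (β * ‖g - gs‖ ^ 2) := by
        field_simp
      rw [h2]
      apply mul_le_mul_of_nonneg_left hn2
      positivity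
    have h3 : -(2 * γ) * s + (4 * γ ^ 2 * M / β) * s
        = -(2 * γ * (1 - 2 * γ * M / β)) * s := by
      field_simp; ring
    have h4 : -(2 * γ * (1 - 2 * γ * M / β)) * s
        ≤ -(2 * γ * (1 - 2 * γ * M / β)) * (μ * ‖e‖ ^ 2) := by
      have hpos : 0 < 2 * γ * (1 - 2 * γ * M / β) := by positivity
      nlinarith
    have h5 : -(2 * γ * (1 - 2 * γ * M / β)) * (μ * ‖e‖ ^ 2) = -(2 * ρ * ‖e‖ ^ 2) := by
      rw [hρ]; ring
    nlinarith [sq_nonneg ‖e‖, mul_nonneg hρpos.le (sq_nonneg ‖e‖)]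
  calc ∫ a, ‖T (x - γ • H a) - xstar‖ ^ 2 ∂P
      ≤ ‖e‖ ^ 2 - 2 * γ * ⟪e, g⟫ + 2 * γ * ⟪e, gs⟫
        + 2 * γ ^ 2 * (∫ a, ‖H a‖ ^ 2 ∂P) + 2 * γ ^ 2 * ‖gs‖ ^ 2 := by
        rw [← hIeq]; exact hmono
    _ ≤ (1 - ρ) * ‖e‖ ^ 2 + γ ^ 2 * σ1sq := by
        rw [hσ1]
        nlinarith [sq_nonneg γ, mul_nonneg (mul_nonneg (by norm_num : (0:ℝ) ≤ 2)
          (sq_nonneg γ)) hM.le]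
    _ = (1 - ρ) * ‖x - xstar‖ ^ 2 + γ ^ 2 * σ1sq := by rw [he]
end
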